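/- Let α > -1 real and -1 < β ≤ 0, β ∈ 𝒥_α (so that H_{α,β}(t) > 0 on [0,1)). Then the metric density ϱ²_{α,β}(z) = ∂²/∂z∂z̄ [log K_{α,β}(z,z)] satisfies, for α ∈ ℕ, the two-sided bound (α+2)/(1-|z|²)² ≤ ϱ²_{α,β}(z) ≤ ((α+β+2)/(1+β))·1/(1-|z|²)² for all z in the unit disk. -/

import Mathlib

/-- Wirtinger derivative `∂f/∂z = (∂f/∂x - i ∂f/∂y)/2` of `f : ℂ → ℂ` (as a real
Fréchet derivative applied to the directions `1` and `i`). -/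
noncomputable def wderiv (f : ℂ → ℂ) (z : ℂ) : ℂ :=
  (fderiv ℝ f z 1 - Complex.I * fderiv ℝ f z Complex.I) / 2

/-- Conjugate Wirtinger derivative `∂f/∂z̄ = (∂f/∂x + i ∂f/∂y)/2`. -/
noncomputable def wderivBar (f : ℂ → ℂ) (z : ℂ) : ℂ :=
  (fderiv ℝ f z 1 + Complex.I * fderiv ℝ f z Complex.I) / 2

/-- For `α ∈ ℕ`, the finite sum `H_{α,β}(t) = β ∑_{n=0}^{α+1} (-t)^n/(n+β) C(α+1,n)`. -/
noncomputable def Hfin (α : ℕ) (β t : ℝ) : ℝ :=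
  β * ∑ n ∈ Finset.range (α + 2), (-t) ^ n / (n + β) * (Nat.choose (α + 1) n)

/-- `κ_{α,β}(z) = log K_{α,β}(z,z) = log Q_{α,β}(|z|²) - (α+2) log(1-|z|²)`, where for
`α ∈ ℕ`, `β ∈ (-1,0]`, `Q_{α,β} = H_{α,β}`. -/
noncomputable def kappaFn (α : ℕ) (β : ℝ) (z : ℂ) : ℂ :=
  ((Real.log (Hfin α β (Complex.normSq z))
      - ((α : ℝ) + 2) * Real.log (1 - Complex.normSq z) : ℝ) : ℂ)

/-!
With `t = |z|²` the potential is radial, `κ = F(t)` with `F = log H - (α + 2) log (1 - t)`, and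
`∂∂̄κ = F'(t) + t F''(t) = (t F')'(t)`. The series `H` solves `t H' + β H = β (1 - t)^{α+1}`,
so `t F' = β (1 - t)^{α+1} / H - β + (α + 2) t / (1 - t)` and
`ϱ² = (α + 2) / (1 - t)² - β (1 - t)^α M / H²` with `M = (α + 1) H + (1 - t) H'`.
For `β < 0` the two bounds become `0 ≤ M` and `(1 + β) (1 - t)^{α+2} M ≤ (α + 1) H²`.
As `t M = (α + β + 1) t H - β D` with `D = H - (1 - t)^{α+2}`, both follow from `0 ≤ D` and
`(1 + β) D ≤ (α + β + 2) t H`; each of these holds because `t^β D`, resp.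
`t^β ((α + β + 2) t H - (1 + β) D) / (1 - t)`, increases on `(0, 1)` from the limit `0` at `0⁺`.
-/

open Set Filter Topology

theorem hasDerivAt_one_sub_pow (n : ℕ) (t : ℝ) :
    HasDerivAt (fun t : ℝ => (1 - t) ^ n) (-(n * (1 - t) ^ (n - 1))) t :=
  ((hasDerivAt_pow n (1 - t)).comp t ((hasDerivAt_id t).const_sub 1)).congr_deriv (by ring)

theorem tendsto_rpow_mul_nhdsGT_zero {β : ℝ} (hβ : -1 < β) {g : ℝ → ℝ} {g' : ℝ}
    (hg : HasDerivAt g g' 0) (hg0 : g 0 = 0) :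
    Tendsto (fun t => t ^ β * g t) (𝓝[>] 0) (𝓝 0) := by
  have hslope : Tendsto (fun t => g t / t) (𝓝[>] 0) (𝓝 g') := by
    refine ((hasDerivAt_iff_tendsto_slope.1 hg).mono_left
      (nhdsWithin_mono 0 fun t ht => ne_of_gt ht)).congr fun t => ?_
    simp [slope_def_field, hg0]
  have hpow : Tendsto (fun t : ℝ => t ^ (β + 1)) (𝓝[>] 0) (𝓝 0) := by
    have h := (Real.continuousAt_rpow_const 0 (β + 1) (Or.inr (by linarith))).tendsto
    rw [Real.zero_rpow (by linarith)] at h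
    exact h.mono_left nhdsWithin_le_nhds
  refine (zero_mul g' ▸ hpow.mul hslope).congr' ?_
  filter_upwards [self_mem_nhdsWithin] with t (ht : 0 < t)
  rw [Real.rpow_add ht, Real.rpow_one]
  field_simp

/-- Since `(t^β g)' = t^{β-1} (β g + t g')`, the function `t^β g` is monotone on `(0, b)`,
and it tends to `0` at `0⁺` because `β > -1`. -/
theorem nonneg_of_mul_add_mul_deriv_nonneg {β b : ℝ} (hβ : -1 < β) {g g' : ℝ → ℝ}
    (hg : ∀ t ∈ Ico 0 b, HasDerivAt g (g' t) t) (hg0 : g 0 = 0)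
    (hpos : ∀ t ∈ Ioo 0 b, 0 ≤ β * g t + t * g' t) {t : ℝ} (ht : t ∈ Ico 0 b) : 0 ≤ g t := by
  rcases ht.1.eq_or_lt with rfl | ht0
  · exact hg0.ge
  have hderiv : ∀ s ∈ Ioo 0 b,
      HasDerivAt (fun s => s ^ β * g s) (s ^ (β - 1) * (β * g s + s * g' s)) s := by
    intro s hs
    refine ((Real.hasDerivAt_rpow_const (Or.inl hs.1.ne')).mul
      (hg s ⟨hs.1.le, hs.2⟩)).congr_deriv ?_
    rw [show s ^ β = s ^ (β - 1) * s by rw [← Real.rpow_add_one hs.1.ne', sub_add_cancel]]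
    ring
  have hmono : MonotoneOn (fun s => s ^ β * g s) (Ioo 0 b) := by
    refine monotoneOn_of_hasDerivWithinAt_nonneg (f' := fun s => s ^ (β - 1) * (β * g s + s * g' s))
      (convex_Ioo 0 b)
      (fun s hs => (hderiv s hs).continuousAt.continuousWithinAt) (fun s hs => ?_) fun s hs => ?_
    all_goals rw [interior_Ioo] at hs
    · exact (hderiv s hs).hasDerivWithinAt
    · exact mul_nonneg (Real.rpow_nonneg hs.1.le _) (hpos s hs)
  have hle : 0 ≤ t ^ β * g t := by
    refine le_of_tendsto (tendsto_rpow_mul_nhdsGT_zero hβ (hg 0 ⟨le_rfl, ht0.trans ht.2⟩) hg0) ?_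
    filter_upwards [Ioo_mem_nhdsGT ht0] with s hs
    exact hmono ⟨hs.1, hs.2.trans ht.2⟩ ⟨ht0, ht.2⟩ hs.2.le
  exact (mul_nonneg_iff_of_pos_left (Real.rpow_pos_of_pos ht0 β)).1 hle

section Wirtinger

open Complex ComplexConjugate

theorem hasFDerivAt_normSq (z : ℂ) :
    HasFDerivAt normSq ((2 * z.re) • reCLM + (2 * z.im) • imCLM) z := by
  have hre : HasFDerivAt re reCLM z := reCLM.hasFDerivAt
  have him : HasFDerivAt im imCLM z := imCLM.hasFDerivAt
  have h := (hre.fun_mul hre).fun_add (him.fun_mul him)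
  rw [show (normSq : ℂ → ℝ) = fun w => w.re * w.re + w.im * w.im from funext normSq_apply]
  refine h.congr_fderiv ?_
  ext v
  simp
  ring

variable {z : ℂ}

theorem hasFDerivAt_ofReal_comp_normSq {F : ℝ → ℝ} {F' : ℝ} (hF : HasDerivAt F F' (normSq z)) :
    HasFDerivAt (fun w => (F (normSq w) : ℂ))
      (ofRealCLM.comp (F' • ((2 * z.re) • reCLM + (2 * z.im) • imCLM))) z :=
  ofRealCLM.hasFDerivAt.comp z (hF.comp_hasFDerivAt z (hasFDerivAt_normSq z))

theorem wderiv_ofReal_comp_normSq {F : ℝ → ℝ} {F' : ℝ} (hF : HasDerivAt F F' (normSq z)) :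
    wderiv (fun w => (F (normSq w) : ℂ)) z = F' * conj z := by
  rw [wderiv, (hasFDerivAt_ofReal_comp_normSq hF).fderiv]
  apply Complex.ext <;> simp <;> ring

theorem wderivBar_ofReal_comp_normSq_mul_conj {G : ℝ → ℝ} {G' : ℝ}
    (hG : HasDerivAt G G' (normSq z)) :
    wderivBar (fun w => (G (normSq w) : ℂ) * conj w) z
      = ((G (normSq z) + normSq z * G' : ℝ) : ℂ) := by
  have hconj : HasFDerivAt (fun w => conj w) conjCLE.toContinuousLinearMap z := conjCLE.hasFDerivAt
  rw [wderivBar, ((hasFDerivAt_ofReal_comp_normSq hG).fun_mul hconj).fderiv]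
  apply Complex.ext <;> simp [normSq_apply] <;> ring

theorem wderivBar_wderiv_ofReal_comp_normSq {F F' : ℝ → ℝ} {F'' : ℝ}
    (hF : ∀ᶠ w in 𝓝 z, HasDerivAt F (F' (normSq w)) (normSq w))
    (hF' : HasDerivAt F' F'' (normSq z)) :
    wderivBar (fun w => wderiv (fun w => (F (normSq w) : ℂ)) w) z
      = ((F' (normSq z) + normSq z * F'' : ℝ) : ℂ) := by
  have hev : (fun w => wderiv (fun w => (F (normSq w) : ℂ)) w)
      =ᶠ[𝓝 z] fun w => (F' (normSq w) : ℂ) * conj w :=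
    hF.mono fun w hw => wderiv_ofReal_comp_normSq hw
  rw [wderivBar, hev.fderiv_eq, ← wderivBar]
  exact wderivBar_ofReal_comp_normSq_mul_conj hF'

end Wirtinger

noncomputable def HfinDeriv (α : ℕ) (β t : ℝ) : ℝ :=
  β * ∑ n ∈ Finset.range (α + 2), -(n : ℝ) * (-t) ^ (n - 1) / (n + β) * (Nat.choose (α + 1) n)

section Hfin

variable (α : ℕ)

theorem hasDerivAt_Hfin (β t : ℝ) : HasDerivAt (Hfin α β) (HfinDeriv α β t) t := by
  unfold Hfin HfinDeriv
  refine (HasDerivAt.fun_sum fun n _ => ?_).const_mul β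
  have h := ((hasDerivAt_pow n (-t)).comp t (hasDerivAt_neg t)).div_const ((n : ℝ) + β)
  exact (h.mul_const _).congr_deriv (by ring)

theorem differentiable_HfinDeriv (β : ℝ) : Differentiable ℝ (HfinDeriv α β) := by
  unfold HfinDeriv
  fun_prop

theorem Hfin_zero {β : ℝ} (hβ : β ≠ 0) : Hfin α β 0 = 1 := by
  rw [Hfin, Finset.sum_eq_single 0 (fun n _ hn => by simp [hn]) (by simp)]
  simp [hβ]

theorem HfinDeriv_zero {β : ℝ} : HfinDeriv α β 0 = -β * (α + 1) / (1 + β) := by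
  rw [HfinDeriv, Finset.sum_eq_single 1 (fun n _ hn => ?_) (by simp)]
  · simp; ring
  · rcases n with _ | _ | n <;> simp_all

theorem mul_HfinDeriv {β : ℝ} (hβ : -1 < β) (t : ℝ) :
    t * HfinDeriv α β t = β * ((1 - t) ^ (α + 1) - Hfin α β t) := by
  rcases eq_or_ne β 0 with rfl | hβ0
  · simp [Hfin, HfinDeriv]
  have hbin : (1 - t) ^ (α + 1)
      = ∑ n ∈ Finset.range (α + 2), (-t) ^ n * (Nat.choose (α + 1) n) := by
    simpa [sub_eq_neg_add] using add_pow (-t) 1 (α + 1)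
  simp only [hbin, Hfin, HfinDeriv, Finset.mul_sum, ← Finset.sum_sub_distrib]
  refine Finset.sum_congr rfl fun n _ => ?_
  rcases n with _ | n
  · simp [hβ0]
  · have hne : (n : ℝ) + 1 + β ≠ 0 := by linarith [(n.cast_nonneg : (0 : ℝ) ≤ n)]
    push_cast
    field_simp
    ring

theorem hasDerivAt_Hfin_sub_one_sub_pow (β t : ℝ) :
    HasDerivAt (fun t => Hfin α β t - (1 - t) ^ (α + 2))
      (HfinDeriv α β t + (α + 2) * (1 - t) ^ (α + 1)) t := by
  refine ((hasDerivAt_Hfin α β t).sub (hasDerivAt_one_sub_pow (α + 2) t)).congr_deriv ?_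
  push_cast
  ring

theorem one_sub_pow_le_Hfin {β : ℝ} (hβ : -1 < β) (hβ0 : β ≠ 0) {t : ℝ} (ht : t ∈ Ico 0 1) :
    (1 - t) ^ (α + 2) ≤ Hfin α β t := by
  refine sub_nonneg.1 <| nonneg_of_mul_add_mul_deriv_nonneg hβ
    (fun t _ => hasDerivAt_Hfin_sub_one_sub_pow α β t) (by simp [Hfin_zero α hβ0])
    (fun s hs => ?_) ht
  have hs1 : 0 ≤ 1 - s := by linarith [hs.2]
  have key : β * (Hfin α β s - (1 - s) ^ (α + 2))
      + s * (HfinDeriv α β s + (α + 2) * (1 - s) ^ (α + 1))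
      = (α + β + 2) * s * (1 - s) ^ (α + 1) := by
    linear_combination mul_HfinDeriv α hβ s
  have hcoef : 0 < (α : ℝ) + β + 2 := by linarith [(α.cast_nonneg : (0 : ℝ) ≤ α)]
  rw [key]
  exact mul_nonneg (mul_nonneg hcoef.le hs.1.le) (pow_nonneg hs1 _)

theorem Hfin_sub_one_sub_pow_le {β : ℝ} (hβ : -1 < β) (hβ0 : β ≠ 0) {t : ℝ} (ht : t ∈ Ico 0 1) :
    (1 + β) * (Hfin α β t - (1 - t) ^ (α + 2)) ≤ (α + β + 2) * t * Hfin α β t := by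
  set P : ℝ → ℝ := fun t =>
    (α + β + 2) * (t * Hfin α β t) - (1 + β) * (Hfin α β t - (1 - t) ^ (α + 2))
  set P' : ℝ → ℝ := fun t => (α + β + 2) * (Hfin α β t + t * HfinDeriv α β t)
    - (1 + β) * (HfinDeriv α β t + (α + 2) * (1 - t) ^ (α + 1))
  have hP : ∀ t, HasDerivAt P (P' t) t := fun t =>
    ((((hasDerivAt_id' t).fun_mul (hasDerivAt_Hfin α β t)).const_mul ((α : ℝ) + β + 2)).fun_sub
      ((hasDerivAt_Hfin_sub_one_sub_pow α β t).const_mul (1 + β))).congr_deriv (by simp [P'])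
  have hg : ∀ t ∈ Ico (0 : ℝ) 1, HasDerivAt (fun t => P t / (1 - t))
      ((P' t * (1 - t) + P t) / (1 - t) ^ 2) t := fun t ht =>
    ((hP t).div ((hasDerivAt_id' t).const_sub 1) (by linarith [ht.2])).congr_deriv (by simp)
  have key : ∀ s, s ≠ 1 → β * (P s / (1 - s)) + s * ((P' s * (1 - s) + P s) / (1 - s) ^ 2)
      = (α + 1) * s * (Hfin α β s - (1 - s) ^ (α + 2)) / (1 - s) ^ 2 := by
    intro s hs
    have hs' : 1 - s ≠ 0 := sub_ne_zero.2 hs.symm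
    field_simp
    simp only [P, P']
    linear_combination ((1 - s) * ((α + β + 2) * s - (1 + β))) * mul_HfinDeriv α hβ s
  have hnonneg := nonneg_of_mul_add_mul_deriv_nonneg hβ hg (by simp [P, Hfin_zero α hβ0])
    (fun s hs => by
      have hD := sub_nonneg.2 (one_sub_pow_le_Hfin α hβ hβ0 (Ioo_subset_Ico_self hs))
      rw [key s hs.2.ne]
      exact div_nonneg (mul_nonneg (mul_nonneg (by positivity) hs.1.le) hD) (sq_nonneg _)) ht
  simpa [P, mul_assoc] using (le_div_iff₀ (by linarith [ht.2] : (0 : ℝ) < 1 - t)).1 hnonneg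

end Hfin

noncomputable def Mfin (α : ℕ) (β t : ℝ) : ℝ :=
  (α + 1) * Hfin α β t + (1 - t) * HfinDeriv α β t

section Mfin

variable (α : ℕ) {β : ℝ}

theorem mul_Mfin (hβ : -1 < β) (t : ℝ) :
    t * Mfin α β t = (α + β + 1) * t * Hfin α β t - β * (Hfin α β t - (1 - t) ^ (α + 2)) := by
  rw [Mfin]
  linear_combination (1 - t) * mul_HfinDeriv α hβ t

theorem Mfin_zero (hβ : -1 < β) (hβ0 : β ≠ 0) : Mfin α β 0 = (α + 1) / (1 + β) := by
  rw [Mfin, Hfin_zero α hβ0, HfinDeriv_zero]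
  field_simp [(by linarith : (1 : ℝ) + β ≠ 0)]
  ring

variable (hβ : -1 < β) (hβ0 : β < 0) {t : ℝ} (ht : t ∈ Ico 0 1)
include hβ hβ0 ht

theorem Mfin_nonneg : 0 ≤ Mfin α β t := by
  rcases ht.1.eq_or_lt with rfl | ht0
  · rw [Mfin_zero α hβ hβ0.ne]
    exact div_nonneg (by positivity) (by linarith)
  refine (mul_nonneg_iff_of_pos_left ht0).1 ?_
  rw [mul_Mfin α hβ]
  have hD := sub_nonneg.2 (one_sub_pow_le_Hfin α hβ hβ0.ne ht)
  have hH : 0 ≤ Hfin α β t := le_trans (pow_nonneg (by linarith [ht.2]) _) (sub_nonneg.1 hD)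
  have hcoef : 0 ≤ (α : ℝ) + β + 1 := by linarith [(α.cast_nonneg : (0 : ℝ) ≤ α)]
  nlinarith [mul_nonneg (mul_nonneg hcoef ht0.le) hH, mul_nonneg (neg_nonneg.2 hβ0.le) hD]

theorem one_add_mul_one_sub_pow_mul_Mfin_le :
    (1 + β) * (1 - t) ^ (α + 2) * Mfin α β t ≤ (α + 1) * Hfin α β t ^ 2 := by
  rcases ht.1.eq_or_lt with rfl | ht0
  · rw [Mfin_zero α hβ hβ0.ne, Hfin_zero α hβ0.ne]
    field_simp [(by linarith : (1 : ℝ) + β ≠ 0)]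
    simp
  have hD := one_sub_pow_le_Hfin α hβ hβ0.ne ht
  have hpow : 0 ≤ (1 - t) ^ (α + 2) := pow_nonneg (by linarith [ht.2]) _
  have hstep : (1 + β) * (t * Mfin α β t) ≤ (α + 1) * t * Hfin α β t := by
    rw [mul_Mfin α hβ]
    nlinarith [mul_nonneg (neg_nonneg.2 hβ0.le)
      (sub_nonneg.2 (Hfin_sub_one_sub_pow_le α hβ hβ0.ne ht))]
  refine le_of_mul_le_mul_left ?_ ht0
  calc t * ((1 + β) * (1 - t) ^ (α + 2) * Mfin α β t)
      = (1 - t) ^ (α + 2) * ((1 + β) * (t * Mfin α β t)) := by ring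
    _ ≤ Hfin α β t * ((α + 1) * t * Hfin α β t) :=
      mul_le_mul hD hstep
        (mul_nonneg (by linarith) (mul_nonneg ht0.le (Mfin_nonneg α hβ hβ0 ht))) (hpow.trans hD)
    _ = t * ((α + 1) * Hfin α β t ^ 2) := by ring

end Mfin

noncomputable def bergmanDensity (α : ℕ) (β t : ℝ) : ℝ :=
  (α + 2) / (1 - t) ^ 2 - β * (1 - t) ^ α * Mfin α β t / Hfin α β t ^ 2

section bergmanDensity

variable (α : ℕ) {β : ℝ}

/-- `bergmanDensity` is `(t F')'` for the profile `F = log H - (α + 2) log (1 - t)`. The ODE for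
`H` rewrites `t F'` without `H'`, so no second derivative of `H` is needed. -/
theorem hasDerivAt_mul_logDeriv_profile (hβ : -1 < β) {t : ℝ} (hH : Hfin α β t ≠ 0) (ht : t ≠ 1) :
    HasDerivAt (fun s => s * (HfinDeriv α β s / Hfin α β s + (α + 2) / (1 - s)))
      (bergmanDensity α β t) t := by
  have hfun : (fun s => s * (HfinDeriv α β s / Hfin α β s + (α + 2) / (1 - s)))
      = fun s => β * ((1 - s) ^ (α + 1) - Hfin α β s) / Hfin α β s + (α + 2) * s / (1 - s) := by
    funext s
    rw [mul_add, ← mul_div_assoc, mul_HfinDeriv α hβ, mul_div_assoc', mul_comm s]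
  have ht' : 1 - t ≠ 0 := sub_ne_zero.2 ht.symm
  have hquot := (((hasDerivAt_one_sub_pow (α + 1) t).fun_sub (hasDerivAt_Hfin α β t)).const_mul
    β).div (hasDerivAt_Hfin α β t) hH
  have hrat := ((hasDerivAt_id' t).const_mul ((α : ℝ) + 2)).div
    ((hasDerivAt_id' t).const_sub 1) ht'
  rw [hfun]
  refine (hquot.fun_add hrat).congr_deriv ?_
  rw [bergmanDensity, Mfin, Nat.add_sub_cancel]
  field_simp
  push_cast
  ring

variable (hβ : -1 < β) (hβ0 : β < 0) {t : ℝ} (ht : t ∈ Ico 0 1)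
include hβ hβ0 ht

theorem le_bergmanDensity : (α + 2) / (1 - t) ^ 2 ≤ bergmanDensity α β t := by
  have hM := Mfin_nonneg α hβ hβ0 ht
  have hpow : 0 ≤ (1 - t) ^ α := pow_nonneg (by linarith [ht.2]) _
  rw [bergmanDensity, le_sub_self_iff, div_nonpos_iff]
  exact Or.inr ⟨mul_nonpos_of_nonpos_of_nonneg (mul_nonpos_of_nonpos_of_nonneg hβ0.le hpow) hM,
    sq_nonneg _⟩

theorem bergmanDensity_le :
    bergmanDensity α β t ≤ (α + β + 2) / (1 + β) * (1 / (1 - t) ^ 2) := by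
  have h1t : 0 < 1 - t := by linarith [ht.2]
  have h1β : 0 < 1 + β := by linarith
  have hH : 0 < Hfin α β t := (pow_pos h1t _).trans_le (one_sub_pow_le_Hfin α hβ hβ0.ne ht)
  have hM := one_add_mul_one_sub_pow_mul_Mfin_le α hβ hβ0 ht
  have hsplit : (α + β + 2) / (1 + β) * (1 / (1 - t) ^ 2)
      = (α + 2) / (1 - t) ^ 2 + -β * (α + 1) / ((1 + β) * (1 - t) ^ 2) := by
    field_simp
    ring
  rw [hsplit, bergmanDensity, sub_eq_add_neg, add_le_add_iff_left, ← neg_div,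
    div_le_div_iff₀ (by positivity) (by positivity)]
  calc -(β * (1 - t) ^ α * Mfin α β t) * ((1 + β) * (1 - t) ^ 2)
      = -β * ((1 + β) * (1 - t) ^ (α + 2) * Mfin α β t) := by ring
    _ ≤ -β * ((α + 1) * Hfin α β t ^ 2) := mul_le_mul_of_nonneg_left hM (neg_nonneg.2 hβ0.le)
    _ = -β * (α + 1) * Hfin α β t ^ 2 := by ring

end bergmanDensity

open Complex in
theorem re_wderivBar_wderiv_kappaFn (α : ℕ) {β : ℝ} (hβ : -1 < β)
    (hH : ∀ t ∈ Ico (0 : ℝ) 1, 0 < Hfin α β t) {z : ℂ} (hz : ‖z‖ < 1) :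
    (wderivBar (fun w => wderiv (kappaFn α β) w) z).re = bergmanDensity α β (‖z‖ ^ 2) := by
  have hmem : ∀ {w : ℂ}, ‖w‖ < 1 → normSq w ∈ Ico 0 1 := fun {w} hw =>
    ⟨normSq_nonneg w, by rw [← Complex.sq_norm]; exact pow_lt_one₀ (norm_nonneg w) hw two_ne_zero⟩
  set F' : ℝ → ℝ := fun s => HfinDeriv α β s / Hfin α β s + (α + 2) / (1 - s)
  have hprofile : ∀ s ∈ Ico (0 : ℝ) 1,
      HasDerivAt (fun s => Real.log (Hfin α β s) - (α + 2) * Real.log (1 - s)) (F' s) s := by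
    intro s hs
    have h1s : 1 - s ≠ 0 := by linarith [hs.2]
    refine (((hasDerivAt_Hfin α β s).log (hH s hs).ne').sub
      ((((hasDerivAt_id' s).const_sub 1).log h1s).const_mul _)).congr_deriv ?_
    simp only [F']
    ring
  have hF : ∀ᶠ w in 𝓝 z, HasDerivAt (fun s => Real.log (Hfin α β s) - (α + 2) * Real.log (1 - s))
      (F' (normSq w)) (normSq w) := by
    filter_upwards [(isOpen_lt continuous_norm continuous_const).mem_nhds hz] with w hw
    exact hprofile _ (hmem hw)
  set t := normSq z
  have hHt : Hfin α β t ≠ 0 := (hH t (hmem hz)).ne'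
  have ht1 : t ≠ 1 := (hmem hz).2.ne
  have hF' : HasDerivAt F' (deriv F' t) t :=
    (((differentiable_HfinDeriv α β t).div (hasDerivAt_Hfin α β t).differentiableAt hHt).add
      ((differentiableAt_const _).div (differentiableAt_id.const_sub 1)
        (sub_ne_zero.2 ht1.symm))).hasDerivAt
  change (wderivBar (fun w => wderiv (fun w => ((Real.log (Hfin α β (normSq w))
    - (α + 2) * Real.log (1 - normSq w) : ℝ) : ℂ)) w) z).re = _
  rw [wderivBar_wderiv_ofReal_comp_normSq hF hF', ofReal_re, Complex.sq_norm]
  simpa using ((hasDerivAt_id' t).mul hF').unique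
    (hasDerivAt_mul_logDeriv_profile α hβ hHt ht1)

theorem bergman_metric_bounds (α : ℕ) (β : ℝ) (hβ : β ∈ Set.Ioc (-1 : ℝ) 0)
    (hH : ∀ t ∈ Set.Ico (0 : ℝ) 1, 0 < Hfin α β t)
    (z : ℂ) (hz : ‖z‖ < 1) :
    ((α : ℝ) + 2) / (1 - ‖z‖ ^ 2) ^ 2
        ≤ (wderivBar (fun w => wderiv (kappaFn α β) w) z).re ∧
      (wderivBar (fun w => wderiv (kappaFn α β) w) z).re
        ≤ (((α : ℝ) + β + 2) / (1 + β)) * (1 / (1 - ‖z‖ ^ 2) ^ 2) := by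
  have hβ0 : β < 0 := hβ.2.lt_of_ne fun h => by simpa [h, Hfin] using hH 0 ⟨le_rfl, one_pos⟩
  have ht : ‖z‖ ^ 2 ∈ Ico (0 : ℝ) 1 := ⟨by positivity, pow_lt_one₀ (norm_nonneg z) hz two_ne_zero⟩
  rw [re_wderivBar_wderiv_kappaFn α hβ.1 hH hz]
  exact ⟨le_bergmanDensity α hβ.1 hβ0 ht, bergmanDensity_le α hβ.1 hβ0 ht⟩
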